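/- Let Θ : H → ℝ be three times continuously Fréchet differentiable with uniformly bounded third derivative, i.e., |Θ^{(3)}(ξ)[u,v,w]| ≤ K ‖u‖‖v‖‖w‖ for all ξ, u, v, w ∈ H. Let μ = N(m̄, C) be a Gaussian measure on H, and let R(m) = Θ(m) − Θ_quad(m) be the remainder of the second-order Taylor expansion about m̄. Then ∫_H |R(m)| μ(dm) ≤ √3 · K · (Tr C)^{3/2}. -/

import Mathlib

/-!
Taylor's theorem with Lagrange remainder along the segment `[m̄, m]` gives
`|R m| ≤ K / 6 * ‖m - m̄‖³`, so it remains to bound the third absolute moment of `N(m̄, C)`.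
By Parseval, `‖m - m̄‖² = ∑ᵢ ⟪m - m̄, eᵢ⟫²`, and each coordinate `⟪m - m̄, eᵢ⟫` is a centred real
Gaussian of variance `λᵢ = ⟪C eᵢ, eᵢ⟫`, with moments `λᵢ` and `3 λᵢ²` of orders 2 and 4. Hence
`E ‖m - m̄‖² = Tr C`, and Cauchy–Schwarz on the cross terms of the squared series gives
`E ‖m - m̄‖⁴ ≤ (∑ᵢ √3 λᵢ)² = 3 (Tr C)²`. One more Cauchy–Schwarz,
`E ‖m - m̄‖³ ≤ (E ‖m - m̄‖²)^{1/2} (E ‖m - m̄‖⁴)^{1/2}`, gives `√3 (Tr C)^{3/2}`.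
-/

open MeasureTheory RealInnerProductSpace

/-- `μ` is the Gaussian measure on the Hilbert space `H` with mean `a` and covariance
operator `C`, characterized by one-dimensional projections. -/
def IsGaussianH {H : Type*} [NormedAddCommGroup H] [InnerProductSpace ℝ H]
    [MeasurableSpace H] (μ : Measure H) (a : H) (C : H →L[ℝ] H) : Prop :=
  IsProbabilityMeasure μ ∧
  ∀ b : H, μ.map (fun s => ⟪s, b⟫) =
    ProbabilityTheory.gaussianReal ⟪a, b⟫ (Real.toNNReal ⟪C b, b⟫)

open ProbabilityTheory Real Set
open scoped NNReal ENNReal Nat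

section Taylor
variable {E F : Type*} [NormedAddCommGroup E] [NormedSpace ℝ E] [NormedAddCommGroup F]
  [NormedSpace ℝ F]

theorem iteratedDeriv_comp_add_smul {f : E → F} {N : WithTop ℕ∞} (hf : ContDiff ℝ N f) {n : ℕ}
    (hn : n ≤ N) (a h : E) (t : ℝ) :
    iteratedDeriv n (fun s : ℝ => f (a + s • h)) t =
      iteratedFDeriv ℝ n f (a + t • h) fun _ => h := by
  have hcomp : (fun s : ℝ => f (a + s • h)) =
      (fun z => f (a + z)) ∘ ContinuousLinearMap.toSpanSingleton ℝ h := rfl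
  rw [iteratedDeriv_eq_iteratedFDeriv, hcomp,
    ContinuousLinearMap.iteratedFDeriv_comp_right _ (f := fun z => f (a + z)) (by fun_prop) _ hn,
    iteratedFDeriv_comp_add_left]
  simp

theorem exists_taylor_mean_remainder_lagrange_segment {f : E → ℝ} {n : ℕ}
    (hf : ContDiff ℝ (n + 1) f) (a h : E) : ∃ t ∈ Ioo (0 : ℝ) 1,
      f (a + h) - ∑ k ∈ Finset.range (n + 1), iteratedFDeriv ℝ k f a (fun _ => h) / k ! =
        iteratedFDeriv ℝ (n + 1) f (a + t • h) (fun _ => h) / (n + 1)! := by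
  have hg : ContDiff ℝ (n + 1) fun s : ℝ => f (a + s • h) := by fun_prop
  obtain ⟨t, ht, hrem⟩ := taylor_mean_remainder_lagrange_iteratedDeriv zero_ne_one hg.contDiffOn
  rw [uIoo_of_le zero_le_one] at ht
  refine ⟨t, ht, ?_⟩
  rw [iteratedDeriv_comp_add_smul hf le_rfl, taylor_within_apply] at hrem
  simp only [one_smul, sub_zero, one_pow, mul_one, smul_eq_mul] at hrem
  rw [← hrem]
  congr 1
  refine Finset.sum_congr rfl fun k hk => ?_
  have hkn : (k : WithTop ℕ∞) ≤ n + 1 := by exact_mod_cast (Finset.mem_range.1 hk).le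
  rw [iteratedDerivWithin_eq_iteratedDeriv (uniqueDiffOn_uIcc zero_ne_one)
      (hg.contDiffAt.of_le hkn) (by simp), iteratedDeriv_comp_add_smul hf hkn]
  simp [div_eq_inv_mul]

theorem abs_taylor_two_remainder_le {f : E → ℝ} (hf : ContDiff ℝ 3 f) {K : ℝ}
    (hK : ∀ ξ h : E, |iteratedFDeriv ℝ 3 f ξ (fun _ => h)| ≤ K * ‖h‖ ^ 3) (a x : E) :
    |f x - (f a + iteratedFDeriv ℝ 1 f a ![x - a]
        + (1 / 2) * iteratedFDeriv ℝ 2 f a ![x - a, x - a])| ≤ K / 6 * ‖x - a‖ ^ 3 := by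
  obtain ⟨t, -, hrem⟩ := exists_taylor_mean_remainder_lagrange_segment (n := 2) hf a (x - a)
  simp only [Matrix.vec_single_eq_const, Matrix.vecCons_const]
  rw [add_sub_cancel] at hrem
  have htaylor : ∑ k ∈ Finset.range 3, iteratedFDeriv ℝ k f a (fun _ => x - a) / k ! =
      f a + iteratedFDeriv ℝ 1 f a (fun _ => x - a)
        + 1 / 2 * iteratedFDeriv ℝ 2 f a (fun _ => x - a) := by
    simp only [Finset.sum_range_succ, Finset.sum_range_zero, iteratedFDeriv_zero_apply]
    norm_num
    ring
  rw [← htaylor, hrem, abs_div]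
  norm_num [Nat.factorial]
  linarith [hK (a + t • (x - a)) (x - a)]

end Taylor

theorem integral_pow_two_mul_mul_exp_neg_mul_sq {b : ℝ} (hb : 0 < b) (j : ℕ) :
    ∫ x : ℝ, x ^ (2 * j) * rexp (-b * x ^ 2) =
      b ^ (-(2 * j + 1 : ℝ) / 2) * Gamma (j + 1 / 2) := by
  have habs : (fun x : ℝ => x ^ (2 * j) * rexp (-b * x ^ 2)) =
      fun x => |x| ^ (2 * j) * rexp (-b * |x| ^ 2) := by
    ext x; rw [pow_mul, pow_mul, ← sq_abs x]
  rw [habs, integral_comp_abs (f := fun x => x ^ (2 * j) * rexp (-b * x ^ 2))]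
  have hrpow : ∫ x in Set.Ioi (0 : ℝ), x ^ (2 * j) * rexp (-b * x ^ 2) =
      ∫ x in Set.Ioi (0 : ℝ), x ^ (2 * j : ℝ) * rexp (-b * x ^ (2 : ℝ)) := by
    refine setIntegral_congr_fun measurableSet_Ioi fun x _ => ?_
    norm_cast
  rw [hrpow, integral_rpow_mul_exp_neg_mul_rpow two_pos
    (neg_one_lt_zero.trans_le (by positivity)) hb]
  ring_nf

-- At `j = 0` the truncated subtraction gives `0‼ = 1`, as it should.
theorem integral_pow_two_mul_gaussianReal_zero_one (j : ℕ) :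
    ∫ x, x ^ (2 * j) ∂gaussianReal 0 1 = (2 * j - 1 : ℕ)‼ := by
  have hpdf : ∀ x : ℝ, gaussianPDFReal 0 1 x • x ^ (2 * j) =
      (√(2 * π))⁻¹ * (x ^ (2 * j) * rexp (-(1 / 2) * x ^ 2)) := by
    intro x
    simp only [gaussianPDFReal, NNReal.coe_one, mul_one, sub_zero, smul_eq_mul]
    ring_nf
  have htwo : (1 / 2 : ℝ) ^ (-(2 * j + 1 : ℝ) / 2) = 2 ^ j * √2 := by
    rw [one_div, inv_rpow zero_le_two, ← rpow_neg zero_le_two, sqrt_eq_rpow, ← rpow_natCast,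
      ← rpow_add two_pos]
    ring_nf
  rw [integral_gaussianReal_eq_integral_smul one_ne_zero, integral_congr_ae (ae_of_all _ hpdf),
    integral_const_mul, integral_pow_two_mul_mul_exp_neg_mul_sq (by norm_num), htwo,
    Gamma_nat_add_half, sqrt_mul zero_le_two]
  field_simp

theorem lintegral_enorm_sub_pow_two_mul_gaussianReal (μ : ℝ) (v : ℝ≥0) (j : ℕ) :
    ∫⁻ x, ‖x - μ‖ₑ ^ (2 * j) ∂gaussianReal μ v = (2 * j - 1 : ℕ)‼ * (v : ℝ≥0∞) ^ j := by
  have hmap : (gaussianReal 0 1).map (fun x => NNReal.sqrt v * x + μ) = gaussianReal μ v := by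
    have hcomp : (fun x : ℝ => NNReal.sqrt v * x + μ) = (· + μ) ∘ (NNReal.sqrt v * ·) := rfl
    rw [hcomp, ← Measure.map_map (measurable_add_const μ) (measurable_const_mul _),
      gaussianReal_map_const_mul, gaussianReal_map_add_const]
    congr 1
    · simp
    · ext; simp
  have hstd : ∫⁻ x, ‖x‖ₑ ^ (2 * j) ∂gaussianReal 0 1 = (2 * j - 1 : ℕ)‼ := by
    have hint : Integrable (fun x : ℝ => x ^ (2 * j)) (gaussianReal 0 1) := by
      simpa [pow_mul] using (memLp_id_gaussianReal' (μ := 0) (v := 1) (2 * j : ℕ)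
        (ENNReal.natCast_ne_top _)).integrable_norm_pow'
    simp_rw [← enorm_pow]
    rw [← ofReal_integral_norm_eq_lintegral_enorm hint]
    simp_rw [Real.norm_of_nonneg ((even_two_mul j).pow_nonneg _),
      integral_pow_two_mul_gaussianReal_zero_one]
    exact ENNReal.ofReal_natCast _
  rw [← hmap, lintegral_map (by fun_prop) (by fun_prop)]
  simp only [add_sub_cancel_right, enorm_mul, mul_pow]
  rw [lintegral_const_mul _ (by fun_prop), hstd, mul_comm]
  congr 1
  rw [Real.enorm_of_nonneg (NNReal.coe_nonneg _), pow_mul,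
    ← ENNReal.ofReal_pow (NNReal.coe_nonneg _), ← NNReal.coe_pow, NNReal.sq_sqrt,
    ENNReal.ofReal_coe_nnreal]

theorem ENNReal.ofReal_sqrt_sq {x : ℝ} (hx : 0 ≤ x) :
    ENNReal.ofReal √x ^ 2 = ENNReal.ofReal x := by
  rw [← ENNReal.ofReal_pow (Real.sqrt_nonneg x), Real.sq_sqrt hx]

section LintegralSquares
variable {α : Type*} [MeasurableSpace α] {μ : Measure α}

theorem lintegral_mul_le_of_lintegral_sq_le {f g : α → ℝ≥0∞} (hf : AEMeasurable f μ)
    (hg : AEMeasurable g μ) {a b : ℝ≥0∞} (ha : ∫⁻ x, f x ^ 2 ∂μ ≤ a ^ 2)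
    (hb : ∫⁻ x, g x ^ 2 ∂μ ≤ b ^ 2) : ∫⁻ x, f x * g x ∂μ ≤ a * b := by
  have hsqrt : ∀ {c d : ℝ≥0∞}, c ≤ d ^ 2 → c ^ (1 / 2 : ℝ) ≤ d := fun {c d} h =>
    calc c ^ (1 / 2 : ℝ) ≤ (d ^ 2) ^ ((2 : ℕ)⁻¹ : ℝ) := by
          rw [one_div, ← Nat.cast_ofNat]; exact ENNReal.rpow_le_rpow h (by positivity)
      _ = d := ENNReal.pow_rpow_inv_natCast two_ne_zero d
  calc ∫⁻ x, f x * g x ∂μ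
      ≤ (∫⁻ x, f x ^ (2 : ℝ) ∂μ) ^ (1 / 2 : ℝ) * (∫⁻ x, g x ^ (2 : ℝ) ∂μ) ^ (1 / 2 : ℝ) :=
        ENNReal.lintegral_mul_le_Lp_mul_Lq μ Real.HolderConjugate.two_two hf hg
    _ ≤ a * b := by
        simp only [ENNReal.rpow_two]
        exact mul_le_mul' (hsqrt ha) (hsqrt hb)

theorem lintegral_tsum_sq_le {ι : Type*} [Countable ι] {X : ι → α → ℝ≥0∞}
    (hX : ∀ i, AEMeasurable (X i) μ) {c : ι → ℝ≥0∞} (hc : ∀ i, ∫⁻ x, X i x ^ 2 ∂μ ≤ c i ^ 2) :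
    ∫⁻ x, (∑' i, X i x) ^ 2 ∂μ ≤ (∑' i, c i) ^ 2 := by
  have hexpand : ∀ (u : ι → ℝ≥0∞), (∑' i, u i) ^ 2 = ∑' i, ∑' j, u i * u j := fun u => by
    simp_rw [sq, ← ENNReal.tsum_mul_right, ← ENNReal.tsum_mul_left]
  simp_rw [hexpand]
  rw [lintegral_tsum (f := fun i x => ∑' j, X i x * X j x)
    fun i => AEMeasurable.tsum fun j => (hX i).mul (hX j)]
  refine ENNReal.tsum_le_tsum fun i => ?_
  rw [lintegral_tsum (f := fun j x => X i x * X j x) fun j => (hX i).mul (hX j)]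
  exact ENNReal.tsum_le_tsum fun j =>
    lintegral_mul_le_of_lintegral_sq_le (hX i) (hX j) (hc i) (hc j)

end LintegralSquares

section HilbertSpace
variable {H : Type*} [NormedAddCommGroup H] [InnerProductSpace ℝ H] {ι : Type*}

theorem Orthonormal.countable [TopologicalSpace.SeparableSpace H] {e : ι → H}
    (he : Orthonormal ℝ e) : Countable ι := by
  refine Pairwise.countable_of_isOpen_disjoint (s := fun i => Metric.ball (e i) 2⁻¹)
    (fun i j hij => Metric.ball_disjoint_ball ?_) (fun _ => Metric.isOpen_ball)
    (fun _ => Metric.nonempty_ball.2 (by norm_num))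
  have hdist : dist (e i) (e j) ^ 2 = 2 := by
    rw [dist_eq_norm, norm_sub_sq_real, he.norm_eq_one, he.norm_eq_one, he.inner_eq_zero hij]
    norm_num
  nlinarith [dist_nonneg (x := e i) (y := e j)]

theorem HilbertBasis.enorm_sq_eq_tsum (e : HilbertBasis ι ℝ H) (x : H) :
    ‖x‖ₑ ^ 2 = ∑' i, ‖⟪x, e i⟫‖ₑ ^ 2 := by
  have hsum : HasSum (fun i => ⟪x, e i⟫ ^ 2) (‖x‖ ^ 2) := by
    simpa [sq, real_inner_comm (e _) x] using e.hasSum_inner_mul_inner x x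
  simp_rw [Real.enorm_eq_ofReal_abs, ← ofReal_norm, ← ENNReal.ofReal_pow (abs_nonneg _),
    ← ENNReal.ofReal_pow (norm_nonneg _), sq_abs, ← hsum.tsum_eq]
  exact ENNReal.ofReal_tsum_of_nonneg (fun _ => sq_nonneg _) hsum.summable

end HilbertSpace

namespace IsGaussianH
variable {H : Type*} [NormedAddCommGroup H] [InnerProductSpace ℝ H] [MeasurableSpace H]
  [OpensMeasurableSpace H] {μ : Measure H} {a : H} {C : H →L[ℝ] H}

theorem lintegral_enorm_inner_sub_pow_two_mul (hμ : IsGaussianH μ a C) (b : H) (j : ℕ) :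
    ∫⁻ m, ‖⟪m - a, b⟫‖ₑ ^ (2 * j) ∂μ = (2 * j - 1 : ℕ)‼ * ENNReal.ofReal ⟪C b, b⟫ ^ j := by
  simp_rw [inner_sub_left]
  rw [← lintegral_map (f := fun x => ‖x - ⟪a, b⟫‖ₑ ^ (2 * j)) (by fun_prop) (by fun_prop),
    hμ.2 b, lintegral_enorm_sub_pow_two_mul_gaussianReal]
  rfl

variable [TopologicalSpace.SeparableSpace H] {ι : Type*} (e : HilbertBasis ι ℝ H)

theorem lintegral_enorm_sub_sq (hμ : IsGaussianH μ a C) :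
    ∫⁻ m, ‖m - a‖ₑ ^ 2 ∂μ = ∑' i, ENNReal.ofReal ⟪C (e i), e i⟫ := by
  have := e.orthonormal.countable
  simp_rw [e.enorm_sq_eq_tsum]
  rw [lintegral_tsum fun i => by fun_prop]
  exact tsum_congr fun i => by simpa using hμ.lintegral_enorm_inner_sub_pow_two_mul (e i) 1

theorem lintegral_enorm_sub_pow_four_le (hμ : IsGaussianH μ a C) :
    ∫⁻ m, ‖m - a‖ₑ ^ 4 ∂μ ≤ 3 * (∑' i, ENNReal.ofReal ⟪C (e i), e i⟫) ^ 2 := by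
  have := e.orthonormal.countable
  have hsqrt3 : ENNReal.ofReal √3 ^ 2 = 3 := by
    rw [ENNReal.ofReal_sqrt_sq zero_le_three, ENNReal.ofReal_ofNat]
  have hfour : ∀ m, ‖m - a‖ₑ ^ 4 = (∑' i, ‖⟪m - a, e i⟫‖ₑ ^ 2) ^ 2 := fun m => by
    rw [← e.enorm_sq_eq_tsum, ← pow_mul]
  simp_rw [hfour]
  calc _ ≤ (∑' i, ENNReal.ofReal √3 * ENNReal.ofReal ⟪C (e i), e i⟫) ^ 2 := by
        refine lintegral_tsum_sq_le (fun i => by fun_prop) fun i => ?_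
        simp_rw [← pow_mul, mul_pow, hsqrt3]
        exact (hμ.lintegral_enorm_inner_sub_pow_two_mul (e i) 2).le
    _ = 3 * (∑' i, ENNReal.ofReal ⟪C (e i), e i⟫) ^ 2 := by
        rw [ENNReal.tsum_mul_left, mul_pow, hsqrt3]

theorem lintegral_enorm_sub_pow_three_le (hμ : IsGaussianH μ a C) :
    ∫⁻ m, ‖m - a‖ₑ ^ 3 ∂μ ≤
      ENNReal.ofReal √3 * (∑' i, ENNReal.ofReal ⟪C (e i), e i⟫) ^ (3 / 2 : ℝ) := by
  set T := ∑' i, ENNReal.ofReal ⟪C (e i), e i⟫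
  have hsqrt3 : ENNReal.ofReal √3 ^ 2 = 3 := by
    rw [ENNReal.ofReal_sqrt_sq zero_le_three, ENNReal.ofReal_ofNat]
  have hsqrtT : (T ^ (1 / 2 : ℝ)) ^ 2 = T := by
    rw [← ENNReal.rpow_natCast, ← ENNReal.rpow_mul]; norm_num
  have hT32 : T ^ (3 / 2 : ℝ) = T ^ (1 / 2 : ℝ) * T := by
    rw [show (3 / 2 : ℝ) = 1 / 2 + 1 by norm_num,
      ENNReal.rpow_add_of_nonneg _ _ (by norm_num) zero_le_one, ENNReal.rpow_one]
  calc ∫⁻ m, ‖m - a‖ₑ ^ 3 ∂μ = ∫⁻ m, ‖m - a‖ₑ * ‖m - a‖ₑ ^ 2 ∂μ := by simp_rw [pow_succ']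
    _ ≤ T ^ (1 / 2 : ℝ) * (ENNReal.ofReal √3 * T) := by
        refine lintegral_mul_le_of_lintegral_sq_le (by fun_prop) (by fun_prop) ?_ ?_
        · rw [hsqrtT, hμ.lintegral_enorm_sub_sq e]
        · simp_rw [← pow_mul, mul_pow, hsqrt3]
          exact hμ.lintegral_enorm_sub_pow_four_le e
    _ = ENNReal.ofReal √3 * T ^ (3 / 2 : ℝ) := by rw [hT32]; ring

theorem lintegral_enorm_sub_pow_three_le_ofReal (hμ : IsGaussianH μ a C)
    (hC : ∀ x, 0 ≤ ⟪C x, x⟫) (htr : Summable fun i => ⟪C (e i), e i⟫) :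
    ∫⁻ m, ‖m - a‖ₑ ^ 3 ∂μ ≤ ENNReal.ofReal (√3 * (∑' i, ⟪C (e i), e i⟫) ^ (3 / 2 : ℝ)) := by
  have h := hμ.lintegral_enorm_sub_pow_three_le e
  rwa [← ENNReal.ofReal_tsum_of_nonneg (fun i => hC _) htr,
    ENNReal.ofReal_rpow_of_nonneg (tsum_nonneg fun i => hC _) (by norm_num),
    ← ENNReal.ofReal_mul (Real.sqrt_nonneg 3)] at h

theorem integrable_norm_sub_pow_three (hμ : IsGaussianH μ a C)
    (hC : ∀ x, 0 ≤ ⟪C x, x⟫) (htr : Summable fun i => ⟪C (e i), e i⟫) :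
    Integrable (fun m => ‖m - a‖ ^ 3) μ :=
  ⟨by fun_prop, by simpa [HasFiniteIntegral] using
    (hμ.lintegral_enorm_sub_pow_three_le_ofReal e hC htr).trans_lt ENNReal.ofReal_lt_top⟩

theorem integral_norm_sub_pow_three_le (hμ : IsGaussianH μ a C)
    (hC : ∀ x, 0 ≤ ⟪C x, x⟫) (htr : Summable fun i => ⟪C (e i), e i⟫) :
    ∫ m, ‖m - a‖ ^ 3 ∂μ ≤ √3 * (∑' i, ⟪C (e i), e i⟫) ^ (3 / 2 : ℝ) := by
  rw [integral_eq_lintegral_of_nonneg_ae (ae_of_all _ fun _ => by positivity) (by fun_prop)]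
  refine ENNReal.toReal_le_of_le_ofReal
    (mul_nonneg (Real.sqrt_nonneg 3) (Real.rpow_nonneg (tsum_nonneg fun i => hC _) _)) ?_
  simpa [ENNReal.ofReal_pow, ofReal_norm] using
    hμ.lintegral_enorm_sub_pow_three_le_ofReal e hC htr

end IsGaussianH

theorem expected_taylor_remainder_bound_general
    {H : Type*} [NormedAddCommGroup H] [InnerProductSpace ℝ H]
    [TopologicalSpace.SeparableSpace H] [MeasurableSpace H] [BorelSpace H]
    (Θ : H → ℝ) (hΘ : ContDiff ℝ 3 Θ)
    (K : ℝ)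
    (hK : ∀ (ξ u v w : H), |iteratedFDeriv ℝ 3 Θ ξ ![u, v, w]| ≤ K * (‖u‖ * ‖v‖ * ‖w‖))
    (mbar : H) (μ : Measure H) (C : H →L[ℝ] H)
    (hCpos : ∀ x : H, 0 ≤ ⟪C x, x⟫)
    (hμ : IsGaussianH μ mbar C)
    {ι : Type*} (e : HilbertBasis ι ℝ H)
    (htr : Summable fun i => ⟪C (e i), e i⟫) :
    ∫ m, |Θ m - (Θ mbar + iteratedFDeriv ℝ 1 Θ mbar ![m - mbar]
        + (1 / 2) * iteratedFDeriv ℝ 2 Θ mbar ![m - mbar, m - mbar])| ∂μ ≤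
      Real.sqrt 3 * K * (∑' i, ⟪C (e i), e i⟫) ^ ((3 : ℝ) / 2) := by
  set S := ∑' i, ⟪C (e i), e i⟫
  have hR := abs_taylor_two_remainder_le hΘ (fun ξ h => by
    simpa [Matrix.vecCons_const, Matrix.vec_single_eq_const, pow_three, mul_assoc]
      using hK ξ h h h) mbar
  -- `hK` forces `0 ≤ K` only when `H` has a nonzero vector.
  rcases subsingleton_or_nontrivial H with hH | hH
  · have hS : S = 0 := by simp [S, Subsingleton.elim (e _) 0]
    have hzero : ∀ m : H, ‖m - mbar‖ = 0 := fun m => by simp [Subsingleton.elim m mbar]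
    rw [integral_congr_ae (g := 0) (ae_of_all _ fun m =>
      le_antisymm ((hR m).trans_eq (by simp [hzero])) (abs_nonneg _))]
    simp [hS]
  have hK0 : 0 ≤ K := by
    obtain ⟨u, hu⟩ := exists_ne (0 : H)
    exact nonneg_of_mul_nonneg_left ((abs_nonneg _).trans (hK mbar u u u)) (by positivity)
  have hmom := hμ.integral_norm_sub_pow_three_le e hCpos htr
  have hB : 0 ≤ √3 * S ^ (3 / 2 : ℝ) := (integral_nonneg fun _ => by positivity).trans hmom
  calc _ ≤ ∫ m, K / 6 * ‖m - mbar‖ ^ 3 ∂μ :=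
        integral_mono_of_nonneg (ae_of_all _ fun _ => abs_nonneg _)
          ((hμ.integrable_norm_sub_pow_three e hCpos htr).const_mul _) (ae_of_all _ hR)
    _ = K / 6 * ∫ m, ‖m - mbar‖ ^ 3 ∂μ := integral_const_mul _ _
    _ ≤ K / 6 * (√3 * S ^ (3 / 2 : ℝ)) := by gcongr
    _ ≤ √3 * K * S ^ (3 / 2 : ℝ) := by nlinarith

/-- If `Θ : H → ℝ` is three times continuously Fréchet differentiable with
uniformly bounded third derivative (bound `K`), `μ = N(mbar, C)` is Gaussian, and `R` is the
remainder of the second-order Taylor expansion of `Θ` about `mbar`, then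
`∫ |R| dμ ≤ √3 · K · (Tr C)^{3/2}`. -/
theorem expected_taylor_remainder_bound
    {H : Type*} [NormedAddCommGroup H] [InnerProductSpace ℝ H] [CompleteSpace H]
    [TopologicalSpace.SeparableSpace H] [MeasurableSpace H] [BorelSpace H]
    (Θ : H → ℝ) (hΘ : ContDiff ℝ 3 Θ)
    (K : ℝ)
    (hK : ∀ (ξ u v w : H), |iteratedFDeriv ℝ 3 Θ ξ ![u, v, w]| ≤ K * (‖u‖ * ‖v‖ * ‖w‖))
    (mbar : H) (μ : Measure H) (C : H →L[ℝ] H)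
    (hCsa : ∀ x y : H, ⟪C x, y⟫ = ⟪x, C y⟫)
    (hCpos : ∀ x : H, 0 ≤ ⟪C x, x⟫)
    (hμ : IsGaussianH μ mbar C)
    {ι : Type*} (e : HilbertBasis ι ℝ H)
    (htr : Summable fun i => ⟪C (e i), e i⟫) :
    ∫ m, |Θ m - (Θ mbar + iteratedFDeriv ℝ 1 Θ mbar ![m - mbar]
        + (1 / 2) * iteratedFDeriv ℝ 2 Θ mbar ![m - mbar, m - mbar])| ∂μ ≤
      Real.sqrt 3 * K * (∑' i, ⟪C (e i), e i⟫) ^ ((3 : ℝ) / 2) :=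
  expected_taylor_remainder_bound_general Θ hΘ K hK mbar μ C hCpos hμ e htr
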